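/- arXiv:2007.06471 — 5 statements merged into one kernel-verified Lean document; each statement's English description precedes it below -/
import Mathlib

section
/- For the E(2) Kähler–Einstein ODE system, the function c² - a² satisfies (c² - a²)' = -(c² - a²)(c² + a²) + 2a²b²c². Consequently, if c(t₀)² - a(t₀)² ≥ 0 and the solution exists on [t₀, t₁] with a, b, c positive, then the set where c² - a² < 0 is invariant backwards in time: if c² - a² < 0 at some point, it remains negative for all earlier times in the solution interval. -/
/-!
Differentiating gives `(c² - a²)' = -(c² - a²)(c² + a²) + 2a²b²c²`, which equals `2a²b²c² > 0`
wherever `c² = a²`. So `c² - a²` crosses zero only upwards: once it is `≥ 0` it stays `≥ 0`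
(continuous induction on `[t, t₁]`), which is the contrapositive of the backward invariance
of `{c² - a² < 0}`.
-/

open Set Filter Topology

lemma HasDerivAt.eventually_nhdsGT_lt {f : ℝ → ℝ} {f' x : ℝ} (hf : HasDerivAt f f' x)
    (hf' : 0 < f') : ∀ᶠ y in 𝓝[>] x, f x < f y := by
  filter_upwards [(hf.tendsto_slope.mono_left (nhdsGT_le_nhdsNE x)).eventually
    (eventually_gt_nhds hf'), self_mem_nhdsWithin] with y hslope hxy
  exact (slope_pos_iff_of_le hxy.le).mp hslope

theorem nonneg_of_left_nonneg_of_deriv_pos_at_zero {f f' : ℝ → ℝ} {a b : ℝ}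
    (hf : ∀ x ∈ Icc a b, HasDerivAt f (f' x) x) (hf' : ∀ x ∈ Icc a b, f x = 0 → 0 < f' x)
    (ha : 0 ≤ f a) : ∀ x ∈ Icc a b, 0 ≤ f x := by
  have hcont : ContinuousOn f (Icc a b) := fun x hx => (hf x hx).continuousAt.continuousWithinAt
  have hclosed : IsClosed ({x | 0 ≤ f x} ∩ Icc a b) := by
    rw [inter_comm]
    exact hcont.preimage_isClosed_of_isClosed isClosed_Icc isClosed_Ici
  refine hclosed.Icc_subset_of_forall_mem_nhdsWithin ha fun x ⟨hfx, hx⟩ => ?_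
  rcases (show 0 ≤ f x from hfx).eq_or_lt with hzero | hpos
  · filter_upwards [(hf x (Ico_subset_Icc_self hx)).eventually_nhdsGT_lt
      (hf' x (Ico_subset_Icc_self hx) hzero.symm)] with y hy
    exact hzero.trans_lt hy |>.le
  · exact nhdsWithin_le_nhds <| ((hf x (Ico_subset_Icc_self hx)).continuousAt.eventually
      (eventually_gt_nhds hpos)).mono fun _ h => h.le

section E2System

variable {a b c : ℝ → ℝ} {t : ℝ}

lemma hasDerivAt_sq_sub_sq_of_E2
    (ha : HasDerivAt a (a t / 2 * (-(a t) ^ 2 + (c t) ^ 2)) t)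
    (hc : HasDerivAt c (c t / 2 * ((a t) ^ 2 - (c t) ^ 2 + 2 * (a t) ^ 2 * (b t) ^ 2)) t) :
    HasDerivAt (fun s => (c s) ^ 2 - (a s) ^ 2)
      (-((c t) ^ 2 - (a t) ^ 2) * ((c t) ^ 2 + (a t) ^ 2) +
        2 * (a t) ^ 2 * (b t) ^ 2 * (c t) ^ 2) t := by
  refine ((hc.pow 2).sub (ha.pow 2)).congr_deriv ?_
  ring

lemma sq_sub_sq_deriv_pos_of_eq_zero (ha : 0 < a t) (hb : 0 < b t) (hc : 0 < c t)
    (heq : (c t) ^ 2 - (a t) ^ 2 = 0) :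
    0 < -((c t) ^ 2 - (a t) ^ 2) * ((c t) ^ 2 + (a t) ^ 2) +
      2 * (a t) ^ 2 * (b t) ^ 2 * (c t) ^ 2 := by
  rw [heq]
  positivity

end E2System

theorem stmt_4_general (a b c : ℝ → ℝ) (ξ η : ℝ) (I : Set ℝ) (hI : I = Set.Ioo ξ η)
    (hpos : ∀ t ∈ I, 0 < a t ∧ 0 < b t ∧ 0 < c t)
    (ha : ∀ t ∈ I, HasDerivAt a (a t / 2 * (-(a t) ^ 2 + (c t) ^ 2)) t)
    (hc : ∀ t ∈ I, HasDerivAt c (c t / 2 * ((a t) ^ 2 - (c t) ^ 2 + 2 * (a t) ^ 2 * (b t) ^ 2)) t) :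
    (∀ t ∈ I, HasDerivAt (fun s => (c s) ^ 2 - (a s) ^ 2)
      (-((c t) ^ 2 - (a t) ^ 2) * ((c t) ^ 2 + (a t) ^ 2) + 2 * (a t) ^ 2 * (b t) ^ 2 * (c t) ^ 2) t) ∧
    (∀ t₁ ∈ I, (c t₁) ^ 2 - (a t₁) ^ 2 < 0 →
      ∀ t ∈ I, t ≤ t₁ → (c t) ^ 2 - (a t) ^ 2 < 0) := by
  have hderiv : ∀ t ∈ I, HasDerivAt (fun s => (c s) ^ 2 - (a s) ^ 2)
      (-((c t) ^ 2 - (a t) ^ 2) * ((c t) ^ 2 + (a t) ^ 2) +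
        2 * (a t) ^ 2 * (b t) ^ 2 * (c t) ^ 2) t :=
    fun t ht => hasDerivAt_sq_sub_sq_of_E2 (ha t ht) (hc t ht)
  refine ⟨hderiv, fun t₁ ht₁ hneg t ht hle => ?_⟩
  have hsub : Icc t t₁ ⊆ I := by
    subst hI
    exact ordConnected_Ioo.out ht ht₁
  have hcross : ∀ x ∈ Icc t t₁, (c x) ^ 2 - (a x) ^ 2 = 0 →
      0 < -((c x) ^ 2 - (a x) ^ 2) * ((c x) ^ 2 + (a x) ^ 2) +
        2 * (a x) ^ 2 * (b x) ^ 2 * (c x) ^ 2 := fun x hx hzero => by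
    obtain ⟨hax, hbx, hcx⟩ := hpos x (hsub hx)
    exact sq_sub_sq_deriv_pos_of_eq_zero hax hbx hcx hzero
  by_contra! hnonneg
  have := nonneg_of_left_nonneg_of_deriv_pos_at_zero (fun x hx => hderiv x (hsub hx)) hcross
    hnonneg t₁ ⟨hle, le_rfl⟩
  linarith

/-- For the E(2) Kähler–Einstein ODE system, (c²-a²)' = -(c²-a²)(c²+a²) + 2a²b²c², and
the set where c² - a² < 0 is invariant backwards in time. -/
theorem stmt_4 (a b c : ℝ → ℝ) (ξ η : ℝ) (I : Set ℝ) (hI : I = Set.Ioo ξ η)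
    (hpos : ∀ t ∈ I, 0 < a t ∧ 0 < b t ∧ 0 < c t)
    (ha : ∀ t ∈ I, HasDerivAt a (a t / 2 * (-(a t) ^ 2 + (c t) ^ 2)) t)
    (hb : ∀ t ∈ I, HasDerivAt b (b t / 2 * ((a t) ^ 2 + (c t) ^ 2)) t)
    (hc : ∀ t ∈ I, HasDerivAt c (c t / 2 * ((a t) ^ 2 - (c t) ^ 2 + 2 * (a t) ^ 2 * (b t) ^ 2)) t) :
    (∀ t ∈ I, HasDerivAt (fun s => (c s) ^ 2 - (a s) ^ 2)
      (-((c t) ^ 2 - (a t) ^ 2) * ((c t) ^ 2 + (a t) ^ 2) + 2 * (a t) ^ 2 * (b t) ^ 2 * (c t) ^ 2) t) ∧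
    (∀ t₁ ∈ I, (c t₁) ^ 2 - (a t₁) ^ 2 < 0 →
      ∀ t ∈ I, t ≤ t₁ → (c t) ^ 2 - (a t) ^ 2 < 0) :=
  stmt_4_general a b c ξ η I hI hpos ha hc
end

section
/- For the E(2) Kähler–Einstein ODE system, the function c² - a² - 2a²b² satisfies (c² - a² - 2a²b²)' = -(c² - a²)(c² + a²) - 2a²b²c². In particular, if c² - a² - 2a²b² > 0 at some time, then c² - a² - 2a²b² > 0 at all earlier times in the solution interval where a, b, c > 0. -/
/-!
Writing `F = c² - a² - 2a²b²`, the system gives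
`F' = -(c² + a²) F - 2a²b²(2c² + a²) ≤ -(c² + a²) F`.
A solution of a linear differential inequality `F' ≤ g F` has `F · exp (-∫ g)` antitone, so
positivity of `F` can only be lost forward in time, never backward.
-/

open Set

theorem pos_left_of_hasDerivAt_le_mul {F F' g : ℝ → ℝ} {x y : ℝ} (hxy : x ≤ y)
    (hg : ContinuousOn g (Icc x y)) (hF : ContinuousOn F (Icc x y))
    (hF' : ∀ t ∈ Ioo x y, HasDerivAt F (F' t) t) (hle : ∀ t ∈ Ioo x y, F' t ≤ g t * F t)
    (hy : 0 < F y) : 0 < F x := by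
  set G : ℝ → ℝ := fun s => ∫ u in x..s, g u
  have hG : ∀ t ∈ Ioo x y, HasDerivAt G (g t) t := fun t ht =>
    intervalIntegral.integral_hasDerivAt_right
      ((hg.mono (uIcc_of_le ht.1.le ▸ Icc_subset_Icc_right ht.2.le)).intervalIntegrable)
      ((hg.mono Ioo_subset_Icc_self).stronglyMeasurableAtFilter isOpen_Ioo t ht)
      (hg.continuousAt (Icc_mem_nhds ht.1 ht.2))
  have hGcont : ContinuousOn G (Icc x y) := by
    simpa only [uIcc_of_le hxy] using intervalIntegral.continuousOn_primitive_interval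
      (hg.integrableOn_compact isCompact_Icc |>.mono_set (uIcc_of_le hxy).subset)
  have hanti : AntitoneOn (fun s => F s * Real.exp (-G s)) (Icc x y) := by
    refine antitoneOn_of_hasDerivWithinAt_nonpos (convex_Icc x y)
      (hF.mul (hGcont.neg.rexp)) (f' := fun t => (F' t - g t * F t) * Real.exp (-G t))
      (fun t ht => ?_) (fun t ht => ?_)
    · rw [interior_Icc] at ht
      refine (((hF' t ht).mul (hG t ht).neg.exp).congr_deriv ?_).hasDerivWithinAt
      simp only [Pi.neg_apply]
      ring
    · rw [interior_Icc] at ht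
      exact mul_nonpos_of_nonpos_of_nonneg (sub_nonpos.mpr (hle t ht)) (Real.exp_pos _).le
  have hxy' := hanti (left_mem_Icc.mpr hxy) (right_mem_Icc.mpr hxy) hxy
  simp only [G, intervalIntegral.integral_same, neg_zero, Real.exp_zero, mul_one] at hxy'
  exact (mul_pos hy (Real.exp_pos _)).trans_le hxy'

theorem hasDerivAt_sq_sub_sq_sub_two_mul_sq_mul_sq {a b c : ℝ → ℝ} {t : ℝ}
    (ha : HasDerivAt a (a t / 2 * (-(a t) ^ 2 + (c t) ^ 2)) t)
    (hb : HasDerivAt b (b t / 2 * ((a t) ^ 2 + (c t) ^ 2)) t)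
    (hc : HasDerivAt c (c t / 2 * ((a t) ^ 2 - (c t) ^ 2 + 2 * (a t) ^ 2 * (b t) ^ 2)) t) :
    HasDerivAt (fun s => (c s) ^ 2 - (a s) ^ 2 - 2 * (a s) ^ 2 * (b s) ^ 2)
      (-((c t) ^ 2 - (a t) ^ 2) * ((c t) ^ 2 + (a t) ^ 2) - 2 * (a t) ^ 2 * (b t) ^ 2 * (c t) ^ 2)
      t := by
  have ha2 := ha.pow 2
  refine ((hc.pow 2).sub ha2 |>.sub ((ha2.const_mul 2).mul (hb.pow 2))).congr_deriv ?_
  simp only [Pi.pow_apply]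
  ring

theorem stmt_5_general (a b c : ℝ → ℝ) (ξ η : ℝ) (I : Set ℝ) (hI : I = Set.Ioo ξ η)
    (ha : ∀ t ∈ I, HasDerivAt a (a t / 2 * (-(a t) ^ 2 + (c t) ^ 2)) t)
    (hb : ∀ t ∈ I, HasDerivAt b (b t / 2 * ((a t) ^ 2 + (c t) ^ 2)) t)
    (hc : ∀ t ∈ I, HasDerivAt c (c t / 2 * ((a t) ^ 2 - (c t) ^ 2 + 2 * (a t) ^ 2 * (b t) ^ 2)) t) :
    (∀ t ∈ I, HasDerivAt (fun s => (c s) ^ 2 - (a s) ^ 2 - 2 * (a s) ^ 2 * (b s) ^ 2)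
      (-((c t) ^ 2 - (a t) ^ 2) * ((c t) ^ 2 + (a t) ^ 2) - 2 * (a t) ^ 2 * (b t) ^ 2 * (c t) ^ 2) t) ∧
    (∀ t₁ ∈ I, 0 < (c t₁) ^ 2 - (a t₁) ^ 2 - 2 * (a t₁) ^ 2 * (b t₁) ^ 2 →
      ∀ t ∈ I, t ≤ t₁ → 0 < (c t) ^ 2 - (a t) ^ 2 - 2 * (a t) ^ 2 * (b t) ^ 2) := by
  have hF t (ht : t ∈ I) :=
    hasDerivAt_sq_sub_sq_sub_two_mul_sq_mul_sq (ha t ht) (hb t ht) (hc t ht)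
  refine ⟨hF, fun t₁ ht₁ hpos t ht hle => ?_⟩
  have hsub : Icc t t₁ ⊆ I := hI ▸ Icc_subset_Ioo (hI ▸ ht).1 (hI ▸ ht₁).2
  have hcont : ContinuousOn (fun s => -((c s) ^ 2 + (a s) ^ 2)) (Icc t t₁) := fun s hs =>
    ((hc s (hsub hs)).continuousAt.pow 2 |>.add
      ((ha s (hsub hs)).continuousAt.pow 2)).neg.continuousWithinAt
  refine pos_left_of_hasDerivAt_le_mul
    (F := fun s => (c s) ^ 2 - (a s) ^ 2 - 2 * (a s) ^ 2 * (b s) ^ 2) hle hcont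
    (fun s hs => (hF s (hsub hs)).continuousAt.continuousWithinAt)
    (fun s hs => hF s (hsub (Ioo_subset_Icc_self hs))) (fun s _ => ?_) hpos
  nlinarith [show 0 ≤ 2 * (a s) ^ 2 * (b s) ^ 2 * (2 * (c s) ^ 2 + (a s) ^ 2) by positivity]

/-- For the E(2) Kähler–Einstein ODE system,
(c²-a²-2a²b²)' = -(c²-a²)(c²+a²) - 2a²b²c², and positivity of c²-a²-2a²b² propagates
backwards in time. -/
theorem stmt_5 (a b c : ℝ → ℝ) (ξ η : ℝ) (I : Set ℝ) (hI : I = Set.Ioo ξ η)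
    (hpos : ∀ t ∈ I, 0 < a t ∧ 0 < b t ∧ 0 < c t)
    (ha : ∀ t ∈ I, HasDerivAt a (a t / 2 * (-(a t) ^ 2 + (c t) ^ 2)) t)
    (hb : ∀ t ∈ I, HasDerivAt b (b t / 2 * ((a t) ^ 2 + (c t) ^ 2)) t)
    (hc : ∀ t ∈ I, HasDerivAt c (c t / 2 * ((a t) ^ 2 - (c t) ^ 2 + 2 * (a t) ^ 2 * (b t) ^ 2)) t) :
    (∀ t ∈ I, HasDerivAt (fun s => (c s) ^ 2 - (a s) ^ 2 - 2 * (a s) ^ 2 * (b s) ^ 2)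
      (-((c t) ^ 2 - (a t) ^ 2) * ((c t) ^ 2 + (a t) ^ 2) - 2 * (a t) ^ 2 * (b t) ^ 2 * (c t) ^ 2) t) ∧
    (∀ t₁ ∈ I, 0 < (c t₁) ^ 2 - (a t₁) ^ 2 - 2 * (a t₁) ^ 2 * (b t₁) ^ 2 →
      ∀ t ∈ I, t ≤ t₁ → 0 < (c t) ^ 2 - (a t) ^ 2 - 2 * (a t) ^ 2 * (b t) ^ 2) :=
  stmt_5_general a b c ξ η I hI ha hb hc
end

section
/- For the E(2) Kähler–Einstein ODE system restricted to solutions satisfying 0 ≤ c² - a² ≤ 2a²b² on their maximal interval, the functions a, b, c are all nondecreasing; hence they are bounded on any left half of the interval, and the maximal interval extends to -∞. -/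
/-!
The constraint `0 ≤ c² - a² ≤ 2a²b²` makes all three right-hand sides nonnegative, so `a`, `b`,
`c` are nondecreasing; boundedness on left halves follows. If the left endpoint `ξ = r` were
finite, then as `t ↓ r` the functions decrease to limits, and these limits are positive because
on a left half the logarithmic derivatives `a'/a, b'/b, c'/c` are bounded above by constants, so
each function decays at most exponentially. The C¹ vector field of the system has a local
solution through the limit point at time `r` (Picard–Lindelöf); glued to the given solution it
yields a positive solution on a strictly larger interval, contradicting maximality.
-/

/-- A positive solution of the E(2) Kähler–Einstein system on a set `s`. -/
def E2Sol (a b c : ℝ → ℝ) (s : Set ℝ) : Prop :=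
  ∀ t ∈ s, (0 < a t ∧ 0 < b t ∧ 0 < c t) ∧
    HasDerivAt a (a t / 2 * (-(a t) ^ 2 + (c t) ^ 2)) t ∧
    HasDerivAt b (b t / 2 * ((a t) ^ 2 + (c t) ^ 2)) t ∧
    HasDerivAt c (c t / 2 * ((a t) ^ 2 - (c t) ^ 2 + 2 * (a t) ^ 2 * (b t) ^ 2)) t

open Set Filter Topology

lemma monotoneOn_of_hasDerivAt_nonneg_of_isOpen {D : Set ℝ} {f f' : ℝ → ℝ} (hD : Convex ℝ D)
    (hDo : IsOpen D) (hf : ∀ x ∈ D, HasDerivAt f (f' x) x) (hf' : ∀ x ∈ D, 0 ≤ f' x) :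
    MonotoneOn f D :=
  monotoneOn_of_hasDerivWithinAt_nonneg hD (fun x hx ↦ (hf x hx).continuousAt.continuousWithinAt)
    (by rw [hDo.interior_eq]; exact fun x hx ↦ (hf x hx).hasDerivWithinAt)
    (by rwa [hDo.interior_eq])

lemma MonotoneOn.bddAbove_image_inter_Iic {f : ℝ → ℝ} {s : Set ℝ} {a : ℝ} (hf : MonotoneOn f s)
    (ha : a ∈ s) : BddAbove (f '' (s ∩ Iic a)) :=
  ⟨f a, forall_mem_image.2 fun _ hx ↦ hf hx.1 ha hx.2⟩

lemma mul_exp_le_of_hasDerivAt_le_mul {f f' : ℝ → ℝ} {s t K : ℝ} (hst : s ≤ t)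
    (hf : ∀ x ∈ Icc s t, HasDerivAt f (f' x) x) (hK : ∀ x ∈ Icc s t, f' x ≤ K * f x) :
    f t * Real.exp (-(K * (t - s))) ≤ f s := by
  have hanti : AntitoneOn (fun x ↦ f x * Real.exp (-(K * x))) (Icc s t) := by
    refine antitoneOn_of_hasDerivWithinAt_nonpos (convex_Icc s t)
      (f' := fun x ↦ (f' x - K * f x) * Real.exp (-(K * x)))
      (fun x hx ↦ (hf x hx).continuousAt.continuousWithinAt.mul (by fun_prop)) ?_ ?_
    all_goals rw [interior_Icc]; intro x hx
    · exact ((hf x (Ioo_subset_Icc_self hx)).mul ((hasDerivAt_id x).const_mul K).neg.exp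
        |>.congr_deriv (by simp; ring)).hasDerivWithinAt
    · exact mul_nonpos_of_nonpos_of_nonneg (by linarith [hK x (Ioo_subset_Icc_self hx)])
        (Real.exp_pos _).le
  calc f t * Real.exp (-(K * (t - s)))
      = f t * Real.exp (-(K * t)) * Real.exp (K * s) := by
        rw [mul_assoc, ← Real.exp_add]; ring_nf
    _ ≤ f s * Real.exp (-(K * s)) * Real.exp (K * s) :=
        mul_le_mul_of_nonneg_right (hanti ⟨le_rfl, hst⟩ ⟨hst, le_rfl⟩ hst) (Real.exp_pos _).le
    _ = f s := by rw [mul_assoc, ← Real.exp_add]; simp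

lemma pos_of_tendsto_of_hasDerivAt_le_mul {f f' : ℝ → ℝ} {r t K L : ℝ} (hrt : r < t)
    (hf : ∀ x ∈ Ioc r t, HasDerivAt f (f' x) x) (hK : ∀ x ∈ Ioc r t, f' x ≤ K * f x)
    (ht : 0 < f t) (hL : Tendsto f (𝓝[>] r) (𝓝 L)) : 0 < L := by
  have hlim : Tendsto (fun x ↦ f t * Real.exp (-(K * (t - x)))) (𝓝[>] r)
      (𝓝 (f t * Real.exp (-(K * (t - r))))) :=
    ((continuous_const.mul (by fun_prop)).tendsto r).mono_left nhdsWithin_le_nhds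
  have hle : ∀ᶠ x in 𝓝[>] r, f t * Real.exp (-(K * (t - x))) ≤ f x := by
    filter_upwards [Ioo_mem_nhdsGT hrt] with x hx
    exact mul_exp_le_of_hasDerivAt_le_mul hx.2.le
      (fun y hy ↦ hf y ⟨hx.1.trans_le hy.1, hy.2⟩) (fun y hy ↦ hK y ⟨hx.1.trans_le hy.1, hy.2⟩)
  exact (by positivity : 0 < f t * Real.exp (-(K * (t - r)))).trans_le
    (le_of_tendsto_of_tendsto hlim hL hle)

lemma EReal.isOpen_preimage_coe_Ioo (ξ η : EReal) : IsOpen ((↑) ⁻¹' Ioo ξ η : Set ℝ) :=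
  isOpen_Ioo.preimage continuous_coe_real_ereal

lemma EReal.convex_preimage_coe_Ioo (ξ η : EReal) : Convex ℝ ((↑) ⁻¹' Ioo ξ η : Set ℝ) :=
  (ordConnected_Ioo.preimage_mono EReal.coe_strictMono.monotone).convex

section VectorValued

variable {E F : Type*} [NormedAddCommGroup E] [NormedSpace ℝ E] [NormedAddCommGroup F]
  [NormedSpace ℝ F]

lemma hasDerivAt_prodMk_iff {f : ℝ → E} {g : ℝ → F} {e : E} {e' : F} {t : ℝ} :
    HasDerivAt (fun x ↦ (f x, g x)) (e, e') t ↔ HasDerivAt f e t ∧ HasDerivAt g e' t :=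
  ⟨fun h ↦ ⟨by simpa using h.hasFDerivAt.fst.hasDerivAt,
    by simpa using h.hasFDerivAt.snd.hasDerivAt⟩, fun h ↦ h.1.prodMk h.2⟩

lemma hasDerivAt_ite_le_of_tendsto {α γ γ' : ℝ → E} {S : Set ℝ} {r : ℝ} {e : E}
    (hα : HasDerivWithinAt α e (Iic r) r) (hS : S ∈ 𝓝[>] r)
    (hγ : ∀ t ∈ S, HasDerivAt γ (γ' t) t) (hγr : Tendsto γ (𝓝[>] r) (𝓝 (α r)))
    (hγ' : Tendsto γ' (𝓝[>] r) (𝓝 e)) :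
    HasDerivAt (fun t ↦ if t ≤ r then α t else γ t) e r := by
  set Γ : ℝ → E := fun t ↦ if t ≤ r then α t else γ t
  have hS' : S ∩ Ioi r ∈ 𝓝[>] r := inter_mem hS self_mem_nhdsWithin
  have hΓγ : ∀ t ∈ S ∩ Ioi r, HasDerivAt Γ (γ' t) t := fun t ht ↦
    (hγ t ht.1).congr_of_eventuallyEq <|
      eventually_of_mem (Ioi_mem_nhds ht.2) fun x hx ↦ if_neg (not_le.2 hx)
  have hleft : HasDerivWithinAt Γ e (Iic r) r :=
    hα.congr (fun x hx ↦ if_pos hx) (if_pos le_rfl)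
  have hright : HasDerivWithinAt Γ e (Ici r) r := by
    refine hasDerivWithinAt_Ici_of_tendsto_deriv (s := S ∩ Ioi r)
      (fun t ht ↦ (hΓγ t ht).differentiableAt.differentiableWithinAt) ?_ hS' ?_
    · have : Tendsto Γ (𝓝[S ∩ Ioi r] r) (𝓝 (α r)) :=
        (hγr.mono_left (nhdsWithin_mono _ inter_subset_right)).congr'
          (eventually_of_mem self_mem_nhdsWithin fun x hx ↦ (if_neg (not_le.2 hx.2)).symm)
      simpa [ContinuousWithinAt, Γ] using this
    · exact hγ'.congr' (eventually_of_mem hS' fun t ht ↦ (hΓγ t ht).deriv.symm)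
  simpa [Iic_union_Ici] using hleft.union hright

theorem exists_hasDerivAt_extension_left [CompleteSpace E] {v : E → E} {U : Set E} {γ : ℝ → E}
    {S : Set ℝ} {r : ℝ} {L : E} (hv : ContDiffAt ℝ 1 v L) (hU : IsOpen U) (hLU : L ∈ U)
    (hS : S ∈ 𝓝[>] r) (hSr : S ⊆ Ioi r) (hγ : ∀ t ∈ S, γ t ∈ U ∧ HasDerivAt γ (v (γ t)) t)
    (hL : Tendsto γ (𝓝[>] r) (𝓝 L)) :
    ∃ δ > 0, ∃ Γ : ℝ → E, EqOn Γ γ (Ioi r) ∧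
      ∀ t ∈ Ioc (r - δ) r ∪ S, Γ t ∈ U ∧ HasDerivAt Γ (v (Γ t)) t := by
  obtain ⟨α, hαr, ε, hε, hα⟩ :=
    hv.exists_forall_mem_closedBall_exists_eq_forall_mem_Ioo_hasDerivAt₀ r
  have hrε : r ∈ Ioo (r - ε) (r + ε) := ⟨by linarith, by linarith⟩
  obtain ⟨δ, hδ, hαU⟩ := Metric.eventually_nhds_iff.1 <|
    (hα r hrε).continuousAt.preimage_mem_nhds (hαr ▸ hU.mem_nhds hLU)
  set Γ : ℝ → E := fun t ↦ if t ≤ r then α t else γ t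
  refine ⟨min δ ε, lt_min hδ hε, Γ, fun t ht ↦ if_neg (not_le.2 ht), ?_⟩
  rintro t (⟨htl, htr⟩ | htS)
  · have hdist : dist t r < δ := by
      rw [Real.dist_eq, abs_lt]; constructor <;> linarith [min_le_left δ ε]
    have htε : t ∈ Ioo (r - ε) (r + ε) := ⟨by linarith [min_le_right δ ε], by linarith⟩
    rcases htr.lt_or_eq with htr | rfl
    · have hΓα : Γ =ᶠ[𝓝 t] α := eventually_of_mem (Iio_mem_nhds htr) fun x hx ↦ if_pos hx.le
      rw [hΓα.eq_of_nhds]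
      exact ⟨hαU hdist, (hα t htε).congr_of_eventuallyEq hΓα⟩
    · simp only [Γ, le_refl, if_true]
      exact ⟨hαU hdist, hasDerivAt_ite_le_of_tendsto (hα t htε).hasDerivWithinAt hS
        (fun s hs ↦ (hγ s hs).2) (hαr ▸ hL) (hαr ▸ hv.continuousAt.tendsto.comp hL)⟩
  · have hΓγ : Γ =ᶠ[𝓝 t] γ :=
      eventually_of_mem (Ioi_mem_nhds (hSr htS)) fun x hx ↦ if_neg (not_le.2 hx)
    rw [hΓγ.eq_of_nhds]
    exact ⟨(hγ t htS).1, (hγ t htS).2.congr_of_eventuallyEq hΓγ⟩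

end VectorValued

def posOctant : Set (ℝ × ℝ × ℝ) := {p | 0 < p.1 ∧ 0 < p.2.1 ∧ 0 < p.2.2}

lemma isOpen_posOctant : IsOpen posOctant :=
  (isOpen_lt continuous_const continuous_fst).inter
    ((isOpen_lt continuous_const continuous_snd.fst).inter
      (isOpen_lt continuous_const continuous_snd.snd))

noncomputable def e2Field (p : ℝ × ℝ × ℝ) : ℝ × ℝ × ℝ :=
  (p.1 / 2 * (-p.1 ^ 2 + p.2.2 ^ 2),
   p.2.1 / 2 * (p.1 ^ 2 + p.2.2 ^ 2),
   p.2.2 / 2 * (p.1 ^ 2 - p.2.2 ^ 2 + 2 * p.1 ^ 2 * p.2.1 ^ 2))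

lemma contDiff_e2Field : ContDiff ℝ 1 e2Field := by
  unfold e2Field; fun_prop

lemma e2Sol_iff {a b c : ℝ → ℝ} {s : Set ℝ} :
    E2Sol a b c s ↔ ∀ t ∈ s, (a t, b t, c t) ∈ posOctant ∧
      HasDerivAt (fun t ↦ (a t, b t, c t)) (e2Field (a t, b t, c t)) t := by
  simp only [E2Sol, e2Field, hasDerivAt_prodMk_iff]; rfl

lemma e2Field_rates_le {a b c A B C : ℝ} (ha : 0 < a) (hb : 0 < b) (hc : 0 < c) (haA : a ≤ A)
    (hbB : b ≤ B) (hcC : c ≤ C) :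
    a / 2 * (-a ^ 2 + c ^ 2) ≤ C ^ 2 / 2 * a ∧ b / 2 * (a ^ 2 + c ^ 2) ≤ (A ^ 2 + C ^ 2) / 2 * b ∧
      c / 2 * (a ^ 2 - c ^ 2 + 2 * a ^ 2 * b ^ 2) ≤ (A ^ 2 + 2 * A ^ 2 * B ^ 2) / 2 * c := by
  have hA : a ^ 2 ≤ A ^ 2 := pow_le_pow_left₀ ha.le haA 2
  have hB : b ^ 2 ≤ B ^ 2 := pow_le_pow_left₀ hb.le hbB 2
  have hC : c ^ 2 ≤ C ^ 2 := pow_le_pow_left₀ hc.le hcC 2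
  have hAB : a ^ 2 * b ^ 2 ≤ A ^ 2 * B ^ 2 := mul_le_mul hA hB (by positivity) (by positivity)
  refine ⟨?_, ?_, ?_⟩ <;> nlinarith [sq_nonneg a, sq_nonneg c]

namespace E2Sol

variable {a b c : ℝ → ℝ} {s : Set ℝ}

theorem mono {s' : Set ℝ} (hsol : E2Sol a b c s) (hs' : s' ⊆ s) : E2Sol a b c s' :=
  fun t ht ↦ hsol t (hs' ht)

theorem monotoneOn (hsol : E2Sol a b c s) (hs : IsOpen s) (hsc : Convex ℝ s)
    (hcon : ∀ t ∈ s, 0 ≤ (c t) ^ 2 - (a t) ^ 2 ∧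
      (c t) ^ 2 - (a t) ^ 2 ≤ 2 * (a t) ^ 2 * (b t) ^ 2) :
    MonotoneOn a s ∧ MonotoneOn b s ∧ MonotoneOn c s := by
  refine ⟨monotoneOn_of_hasDerivAt_nonneg_of_isOpen hsc hs (fun t ht ↦ (hsol t ht).2.1) ?_,
    monotoneOn_of_hasDerivAt_nonneg_of_isOpen hsc hs (fun t ht ↦ (hsol t ht).2.2.1) ?_,
    monotoneOn_of_hasDerivAt_nonneg_of_isOpen hsc hs (fun t ht ↦ (hsol t ht).2.2.2) ?_⟩ <;>
  intro t ht <;> obtain ⟨⟨ha, hb, hc⟩, -⟩ := hsol t ht <;> have := hcon t ht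
  · have : 0 ≤ -a t ^ 2 + c t ^ 2 := by linarith
    positivity
  · positivity
  · have : 0 ≤ a t ^ 2 - c t ^ 2 + 2 * a t ^ 2 * b t ^ 2 := by linarith
    positivity

theorem exists_tendsto_nhdsGT {r t : ℝ} (hrt : r < t) (hsol : E2Sol a b c (Ioc r t))
    (ha : MonotoneOn a (Ioc r t)) (hb : MonotoneOn b (Ioc r t)) (hc : MonotoneOn c (Ioc r t)) :
    ∃ L ∈ posOctant, Tendsto (fun x ↦ (a x, b x, c x)) (𝓝[>] r) (𝓝 L) := by
  have hlim : ∀ f : ℝ → ℝ, MonotoneOn f (Ioc r t) → (∀ x ∈ Ioc r t, 0 < f x) →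
      Tendsto f (𝓝[>] r) (𝓝 (sInf (f '' Ioo r t))) := fun f hf hpos ↦
    (hf.mono Ioo_subset_Ioc_self).tendsto_nhdsWithin_Ioo_right (nonempty_Ioo.2 hrt)
      ⟨0, forall_mem_image.2 fun x hx ↦ (hpos x (Ioo_subset_Ioc_self hx)).le⟩
  have ht : t ∈ Ioc r t := right_mem_Ioc.2 hrt
  have hrates : ∀ x ∈ Ioc r t, _ := fun x hx ↦ e2Field_rates_le (hsol x hx).1.1
    (hsol x hx).1.2.1 (hsol x hx).1.2.2 (ha hx ht hx.2) (hb hx ht hx.2) (hc hx ht hx.2)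
  have hLa := hlim a ha fun x hx ↦ (hsol x hx).1.1
  have hLb := hlim b hb fun x hx ↦ (hsol x hx).1.2.1
  have hLc := hlim c hc fun x hx ↦ (hsol x hx).1.2.2
  refine ⟨_, ⟨?_, ?_, ?_⟩, hLa.prodMk_nhds (hLb.prodMk_nhds hLc)⟩
  · exact pos_of_tendsto_of_hasDerivAt_le_mul hrt (fun x hx ↦ (hsol x hx).2.1)
      (fun x hx ↦ (hrates x hx).1) (hsol t ht).1.1 hLa
  · exact pos_of_tendsto_of_hasDerivAt_le_mul hrt (fun x hx ↦ (hsol x hx).2.2.1)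
      (fun x hx ↦ (hrates x hx).2.1) (hsol t ht).1.2.1 hLb
  · exact pos_of_tendsto_of_hasDerivAt_le_mul hrt (fun x hx ↦ (hsol x hx).2.2.2)
      (fun x hx ↦ (hrates x hx).2.2) (hsol t ht).1.2.2 hLc

end E2Sol

/-- If a positive maximal solution satisfies 0 ≤ c²-a² ≤ 2a²b², then a, b, c are
nondecreasing, bounded on any left half of the interval, and the maximal interval
extends to -∞. -/
theorem stmt_6 (a b c : ℝ → ℝ) (ξ η : EReal) (hlt : ξ < η) (I : Set ℝ)
    (hI : I = {t : ℝ | ξ < (t : EReal) ∧ (t : EReal) < η})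
    (hsol : E2Sol a b c I)
    (hcon : ∀ t ∈ I, 0 ≤ (c t) ^ 2 - (a t) ^ 2 ∧
      (c t) ^ 2 - (a t) ^ 2 ≤ 2 * (a t) ^ 2 * (b t) ^ 2)
    (hmax : ∀ (A B C : ℝ → ℝ) (ξ' η' : EReal), ξ' ≤ ξ → η ≤ η' →
      E2Sol A B C {t : ℝ | ξ' < (t : EReal) ∧ (t : EReal) < η'} →
      Set.EqOn A a I → Set.EqOn B b I → Set.EqOn C c I → ξ' = ξ ∧ η' = η) :
    MonotoneOn a I ∧ MonotoneOn b I ∧ MonotoneOn c I ∧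
    (∀ t₀ ∈ I, BddAbove (a '' (I ∩ Set.Iic t₀)) ∧ BddAbove (b '' (I ∩ Set.Iic t₀)) ∧
      BddAbove (c '' (I ∩ Set.Iic t₀))) ∧
    ξ = ⊥ := by
  obtain ⟨ha, hb, hc⟩ := hsol.monotoneOn (hI ▸ EReal.isOpen_preimage_coe_Ioo ξ η)
    (hI ▸ EReal.convex_preimage_coe_Ioo ξ η) hcon
  refine ⟨ha, hb, hc, fun t₀ ht₀ ↦ ⟨ha.bddAbove_image_inter_Iic ht₀,
    hb.bddAbove_image_inter_Iic ht₀, hc.bddAbove_image_inter_Iic ht₀⟩, ?_⟩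
  by_contra hξ
  obtain ⟨r, rfl⟩ : ∃ r : ℝ, ξ = r := ⟨ξ.toReal, (EReal.coe_toReal hlt.ne_top hξ).symm⟩
  obtain ⟨t, hrt, htη⟩ := EReal.exists_between_coe_real hlt
  have hrt' : r < t := EReal.coe_lt_coe_iff.1 hrt
  have hIr : I ⊆ Ioi r := fun x hx ↦ EReal.coe_lt_coe_iff.1 (hI ▸ hx).1
  have hIoc : Ioc r t ⊆ I := fun x hx ↦ hI ▸
    ⟨EReal.coe_lt_coe_iff.2 hx.1, (EReal.coe_le_coe_iff.2 hx.2).trans_lt htη⟩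
  obtain ⟨L, hLpos, hL⟩ := (hsol.mono hIoc).exists_tendsto_nhdsGT hrt'
    (ha.mono hIoc) (hb.mono hIoc) (hc.mono hIoc)
  obtain ⟨δ, hδ, Γ, hΓ, hΓsol⟩ := exists_hasDerivAt_extension_left
    contDiff_e2Field.contDiffAt isOpen_posOctant hLpos
    (mem_of_superset (Ioc_mem_nhdsGT hrt') hIoc) hIr (e2Sol_iff.1 hsol) hL
  have hext : E2Sol (fun x ↦ (Γ x).1) (fun x ↦ (Γ x).2.1) (fun x ↦ (Γ x).2.2)
      {x : ℝ | ((r - δ : ℝ) : EReal) < x ∧ (x : EReal) < η} := by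
    refine e2Sol_iff.2 fun x hx ↦ hΓsol x ?_
    rcases le_or_gt x r with hxr | hxr
    · exact Or.inl ⟨EReal.coe_lt_coe_iff.1 hx.1, hxr⟩
    · exact Or.inr (hI ▸ ⟨EReal.coe_lt_coe_iff.2 hxr, hx.2⟩)
  have hξ' := (hmax _ _ _ _ η (EReal.coe_le_coe_iff.2 (by linarith)) le_rfl hext
    (fun x hx ↦ congrArg Prod.fst (hΓ (hIr hx)))
    (fun x hx ↦ congrArg (·.2.1) (hΓ (hIr hx)))
    (fun x hx ↦ congrArg (·.2.2) (hΓ (hIr hx)))).1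
  linarith [EReal.coe_injective hξ']
end

section
/- The only nonzero equilibrium solutions of the system a' = (a/2)(-a² + c²), b' = (b/2)(a² + c²), c' = (c/2)(a² - c² + 2a²b²) with all coordinates nonnegative are the points (q, 0, q) for q > 0 and (0, q, 0) for q > 0 (together with the origin). -/
/-- The nonnegative equilibria of the E(2) Kähler–Einstein vector field are exactly
(q,0,q), (0,q,0) for q > 0, together with the origin. -/
theorem stmt_7 (a b c : ℝ) (ha : 0 ≤ a) (hb : 0 ≤ b) (hc : 0 ≤ c) :
    (a / 2 * (-a ^ 2 + c ^ 2) = 0 ∧ b / 2 * (a ^ 2 + c ^ 2) = 0 ∧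
      c / 2 * (a ^ 2 - c ^ 2 + 2 * a ^ 2 * b ^ 2) = 0) ↔
    ((∃ q > 0, a = q ∧ b = 0 ∧ c = q) ∨ (∃ q > 0, a = 0 ∧ b = q ∧ c = 0) ∨
      (a = 0 ∧ b = 0 ∧ c = 0)) := by
  constructor
  · rintro ⟨h1, h2, h3⟩
    rcases eq_or_lt_of_le ha with ha0 | ha0
    · -- a = 0
      have ha' : a = 0 := ha0.symm
      subst ha'
      have hc3 : c ^ 3 = 0 := by linear_combination -2 * h3
      have hc0 : c = 0 := by
        exact pow_eq_zero_iff (n := 3) (by norm_num) |>.1 hc3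
      subst hc0
      rcases eq_or_lt_of_le hb with hb0 | hb0
      · exact Or.inr (Or.inr ⟨rfl, hb0.symm, rfl⟩)
      · exact Or.inr (Or.inl ⟨b, hb0, rfl, rfl, rfl⟩)
    · -- a > 0
      have hsq : a * ((c - a) * (c + a)) = 0 := by linear_combination 2 * h1
      have hac : c = a := by
        rcases mul_eq_zero.1 hsq with h | h
        · linarith
        · rcases mul_eq_zero.1 h with h | h
          · linarith
          · linarith
      have hb0 : b = 0 := by
        rcases mul_eq_zero.1 h2 with h | h
        · linarith
        · nlinarith
      exact Or.inl ⟨a, ha0, rfl, hb0, hac⟩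
  · rintro (⟨q, hq, rfl, rfl, rfl⟩ | ⟨q, hq, rfl, rfl, rfl⟩ | ⟨rfl, rfl, rfl⟩) <;> norm_num
end

section
/- Suppose 1/√(1+b²) ≤ a/c ≤ k/√(k²+b²) for some k > 0, a, c > 0 along a curve parametrized by b, and d(log(ac))/db = 2(a/c)²b / ((a/c)² + 1). Then 2b/(2+b²) ≤ d(log(ac))/db ≤ 2bk²/(2k²+b²), and integrating from b = 0 with ac → q² gives q²(2+b²)/2 ≤ ac ≤ q²((2k²+b²)/(2k²))^{k²}. -/
/-!
Both bounds on `log (A C)` come from comparing its derivative with that of an explicit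
function having the same behaviour at `b = 0`: since `t ↦ 2 t b / (t + 1)` is increasing, the
bounds `1 / (1 + b²) ≤ (A / C)² ≤ k² / (k² + b²)` pin the derivative between those of
`log (2 + b²)` and `k² log (2 k² + b²)`. A function with the larger derivative gains at least as
much from `0⁺` to `b`, and exponentiating turns these comparisons into the bounds on `A C`.
-/

open Set Filter Topology Real

lemma le_of_monotoneOn_Ioo_of_tendsto_nhdsGT {h : ℝ → ℝ} {x₀ x₁ L : ℝ}
    (hmono : MonotoneOn h (Ioo x₀ x₁)) (hlim : Tendsto h (𝓝[>] x₀) (𝓝 L))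
    {x : ℝ} (hx : x ∈ Ioo x₀ x₁) : L ≤ h x :=
  le_of_tendsto hlim <| by
    filter_upwards [Ioo_mem_nhdsGT hx.1] with y hy
    exact hmono ⟨hy.1, hy.2.trans hx.2⟩ hx hy.2.le

lemma sub_le_sub_of_hasDerivAt_le_of_tendsto_nhdsGT {f g f' g' : ℝ → ℝ} {x₀ x₁ a c : ℝ}
    (hf : ∀ x ∈ Ioo x₀ x₁, HasDerivAt f (f' x) x) (hg : ∀ x ∈ Ioo x₀ x₁, HasDerivAt g (g' x) x)
    (hle : ∀ x ∈ Ioo x₀ x₁, f' x ≤ g' x)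
    (hfa : Tendsto f (𝓝[>] x₀) (𝓝 a)) (hgc : Tendsto g (𝓝[>] x₀) (𝓝 c))
    {x : ℝ} (hx : x ∈ Ioo x₀ x₁) : f x - a ≤ g x - c := by
  have hmono : MonotoneOn (fun y => g y - f y) (Ioo x₀ x₁) := by
    refine monotoneOn_of_hasDerivWithinAt_nonneg (f' := fun y => g' y - f' y)
      (convex_Ioo x₀ x₁)
      (fun y hy => ((hg y hy).sub (hf y hy)).continuousAt.continuousWithinAt)
      (fun y hy => ?_) (fun y hy => ?_)
    all_goals rw [interior_Ioo] at hy
    · exact ((hg y hy).sub (hf y hy)).hasDerivWithinAt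
    · exact sub_nonneg.2 (hle y hy)
  linarith [le_of_monotoneOn_Ioo_of_tendsto_nhdsGT hmono (hgc.sub hfa) hx]

lemma hasDerivAt_log_add_sq {c : ℝ} (hc : 0 < c) (x : ℝ) :
    HasDerivAt (fun t => log (c + t ^ 2)) (2 * x / (c + x ^ 2)) x := by
  have hsq : HasDerivAt (fun t : ℝ => c + t ^ 2) (2 * x) x := by
    simpa using (hasDerivAt_pow 2 x).const_add c
  exact hsq.log (by positivity)

lemma tendsto_log_add_sq_nhdsGT_zero {c : ℝ} (hc : c ≠ 0) :
    Tendsto (fun t => log (c + t ^ 2)) (𝓝[>] 0) (𝓝 (log c)) := by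
  have hcont : ContinuousAt (fun t : ℝ => log (c + t ^ 2)) 0 :=
    ContinuousAt.log (by fun_prop) (by simpa using hc)
  simpa using hcont.tendsto.mono_left nhdsWithin_le_nhds

lemma two_mul_div_two_add_sq_le {r b : ℝ} (hb : 0 < b) (hr : 1 / √(1 + b ^ 2) ≤ r) :
    2 * b / (2 + b ^ 2) ≤ 2 * r ^ 2 * b / (r ^ 2 + 1) := by
  have h1 : (0 : ℝ) < 1 + b ^ 2 := by positivity
  have hsq : 1 / (1 + b ^ 2) ≤ r ^ 2 := by
    simpa [div_pow, sq_sqrt h1.le] using pow_le_pow_left₀ (by positivity) hr 2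
  have key : 1 ≤ r ^ 2 * (1 + b ^ 2) := (div_le_iff₀ h1).1 hsq
  rw [div_le_div_iff₀ (by positivity) (by positivity)]
  nlinarith

lemma le_two_mul_mul_sq_div {r b k : ℝ} (hb : 0 < b) (hr₀ : 0 < r)
    (hr : r ≤ k / √(k ^ 2 + b ^ 2)) :
    2 * r ^ 2 * b / (r ^ 2 + 1) ≤ 2 * b * k ^ 2 / (2 * k ^ 2 + b ^ 2) := by
  have h1 : (0 : ℝ) < k ^ 2 + b ^ 2 := by positivity
  have hsq : r ^ 2 ≤ k ^ 2 / (k ^ 2 + b ^ 2) := by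
    simpa [div_pow, sq_sqrt h1.le] using pow_le_pow_left₀ hr₀.le hr 2
  have key : r ^ 2 * (k ^ 2 + b ^ 2) ≤ k ^ 2 := (le_div_iff₀ h1).1 hsq
  rw [div_le_div_iff₀ (by positivity) (by positivity)]
  nlinarith [sq_nonneg r]

theorem stmt_12_general (A C : ℝ → ℝ) (β k q : ℝ) (hk : 0 < k) (hq : 0 < q)
    (hpos : ∀ b ∈ Set.Ioo (0 : ℝ) β, 0 < A b ∧ 0 < C b)
    (hbound : ∀ b ∈ Set.Ioo (0 : ℝ) β,
      1 / Real.sqrt (1 + b ^ 2) ≤ A b / C b ∧ A b / C b ≤ k / Real.sqrt (k ^ 2 + b ^ 2))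
    (hderiv : ∀ b ∈ Set.Ioo (0 : ℝ) β, HasDerivAt (fun s => Real.log (A s * C s))
      (2 * (A b / C b) ^ 2 * b / ((A b / C b) ^ 2 + 1)) b)
    (hlim : Filter.Tendsto (fun b => A b * C b) (nhdsWithin 0 (Set.Ioi 0)) (nhds (q ^ 2))) :
    ∀ b ∈ Set.Ioo (0 : ℝ) β,
      (2 * b / (2 + b ^ 2) ≤ 2 * (A b / C b) ^ 2 * b / ((A b / C b) ^ 2 + 1) ∧
        2 * (A b / C b) ^ 2 * b / ((A b / C b) ^ 2 + 1) ≤ 2 * b * k ^ 2 / (2 * k ^ 2 + b ^ 2)) ∧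
      q ^ 2 * (2 + b ^ 2) / 2 ≤ A b * C b ∧
      A b * C b ≤ q ^ 2 * ((2 * k ^ 2 + b ^ 2) / (2 * k ^ 2)) ^ (k ^ 2 : ℝ) := by
  have hlow : ∀ s ∈ Ioo 0 β,
      2 * s / (2 + s ^ 2) ≤ 2 * (A s / C s) ^ 2 * s / ((A s / C s) ^ 2 + 1) :=
    fun s hs => two_mul_div_two_add_sq_le hs.1 (hbound s hs).1
  have hupp : ∀ s ∈ Ioo 0 β,
      2 * (A s / C s) ^ 2 * s / ((A s / C s) ^ 2 + 1) ≤ k ^ 2 * (2 * s / (2 * k ^ 2 + s ^ 2)) :=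
    fun s hs => (le_two_mul_mul_sq_div hs.1 (div_pos (hpos s hs).1 (hpos s hs).2)
      (hbound s hs).2).trans_eq (by ring)
  have hq2 : 0 < q ^ 2 := by positivity
  have h2k : 0 < 2 * k ^ 2 := by positivity
  have hloglim := (continuousAt_log hq2.ne').tendsto.comp hlim
  intro b hb
  have hAC : 0 < A b * C b := mul_pos (hpos b hb).1 (hpos b hb).2
  have hratio : 0 < (2 * k ^ 2 + b ^ 2) / (2 * k ^ 2) := by positivity
  refine ⟨⟨hlow b hb, (hupp b hb).trans_eq (by ring)⟩, ?_, ?_⟩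
  · have hgain := sub_le_sub_of_hasDerivAt_le_of_tendsto_nhdsGT
      (fun s _ => hasDerivAt_log_add_sq two_pos s) hderiv hlow
      (tendsto_log_add_sq_nhdsGT_zero two_ne_zero) hloglim hb
    rw [← log_le_log_iff (by positivity) hAC, log_div (by positivity) two_ne_zero,
      log_mul hq2.ne' (by positivity)]
    linarith
  · have hgain := sub_le_sub_of_hasDerivAt_le_of_tendsto_nhdsGT hderiv
      (fun s _ => (hasDerivAt_log_add_sq h2k s).const_mul (k ^ 2)) hupp hloglim
      ((tendsto_log_add_sq_nhdsGT_zero h2k.ne').const_mul (k ^ 2)) hb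
    rw [← log_le_log_iff hAC (by positivity), log_mul hq2.ne' (by positivity), log_rpow hratio,
      log_div (by positivity) h2k.ne']
    linarith

/-- Under the bounds 1/√(1+b²) ≤ a/c ≤ k/√(k²+b²) and
d(log(ac))/db = 2(a/c)²b/((a/c)²+1), one has the estimates
2b/(2+b²) ≤ d(log(ac))/db ≤ 2bk²/(2k²+b²), and after integration from b = 0 with
ac → q², q²(2+b²)/2 ≤ ac ≤ q²((2k²+b²)/(2k²))^{k²}. -/
theorem stmt_12 (A C : ℝ → ℝ) (β k q : ℝ) (hβ : 0 < β) (hk : 0 < k) (hq : 0 < q)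
    (hpos : ∀ b ∈ Set.Ioo (0 : ℝ) β, 0 < A b ∧ 0 < C b)
    (hbound : ∀ b ∈ Set.Ioo (0 : ℝ) β,
      1 / Real.sqrt (1 + b ^ 2) ≤ A b / C b ∧ A b / C b ≤ k / Real.sqrt (k ^ 2 + b ^ 2))
    (hderiv : ∀ b ∈ Set.Ioo (0 : ℝ) β, HasDerivAt (fun s => Real.log (A s * C s))
      (2 * (A b / C b) ^ 2 * b / ((A b / C b) ^ 2 + 1)) b)
    (hlim : Filter.Tendsto (fun b => A b * C b) (nhdsWithin 0 (Set.Ioi 0)) (nhds (q ^ 2))) :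
    ∀ b ∈ Set.Ioo (0 : ℝ) β,
      (2 * b / (2 + b ^ 2) ≤ 2 * (A b / C b) ^ 2 * b / ((A b / C b) ^ 2 + 1) ∧
        2 * (A b / C b) ^ 2 * b / ((A b / C b) ^ 2 + 1) ≤ 2 * b * k ^ 2 / (2 * k ^ 2 + b ^ 2)) ∧
      q ^ 2 * (2 + b ^ 2) / 2 ≤ A b * C b ∧
      A b * C b ≤ q ^ 2 * ((2 * k ^ 2 + b ^ 2) / (2 * k ^ 2)) ^ (k ^ 2 : ℝ) :=
  stmt_12_general A C β k q hk hq hpos hbound hderiv hlim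
end
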